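/- Let N ≥ 3 and let M be any matrix of the uni-modular ensemble with phases Φ. Set W = M/(2√(N−2)) and y_n(Φ) = Tr[Y(Φ)^n]/(N (N−2)^{n/2}). Then for every positive integer n: y_n(Φ) = (2/N) Tr[T_n(W)] + ((N−3)/2) · (1 + (−1)^n)/(N−2)^{n/2}, where T_n is the n-th Chebyshev polynomial of the first kind. -/

import Mathlib

open MeasureTheory Matrix

noncomputable section

/-- The uniform probability measure on `[0, 2π)`. -/
def uniformPhase : Measure ℝ :=
  (ENNReal.ofReal (2 * Real.pi))⁻¹ • volume.restrict (Set.Ico 0 (2 * Real.pi))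

/-- Product measure: the phases `ω μ ν` (used for `μ < ν`) are i.i.d. uniform on `[0, 2π)`. -/
def phaseMeasure (N : ℕ) : Measure (Fin N → Fin N → ℝ) :=
  Measure.pi fun _ => Measure.pi fun _ => uniformPhase

/-- Antisymmetrized phases built from a raw sample: `φ ν μ = - φ μ ν`, `φ μ μ = 0`. -/
def phases (N : ℕ) (ω : Fin N → Fin N → ℝ) : Fin N → Fin N → ℝ :=
  fun μ ν => if μ < ν then ω μ ν else if ν < μ then - (ω ν μ) else 0

/-- The uni-modular matrix with phases `φ`: zero diagonal, `M μ ν = exp(i φ μ ν)` off diagonal. -/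
def umeMatrix (N : ℕ) (φ : Fin N → Fin N → ℝ) : Matrix (Fin N) (Fin N) ℂ :=
  fun μ ν => if μ = ν then 0 else Complex.exp (Complex.I * (φ μ ν : ℂ))


/-- A directed edge of the complete graph on `N` vertices: a pair `e = (j, i)` with `i ≠ j`;
its origin is `e.2` and its terminus is `e.1`. -/
abbrev DirEdge (N : ℕ) : Type := {e : Fin N × Fin N // e.1 ≠ e.2}

/-- The magnetic Hashimoto matrix of the complete graph on `N` vertices with phases `φ`:
`Y(Φ)_{e',e} = (δ_{o(e'),τ(e)} − δ_{e',ê}) · exp((i/2)(φ_e + φ_{e'}))`. -/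
def hashimoto (N : ℕ) (φ : Fin N → Fin N → ℝ) :
    Matrix (DirEdge N) (DirEdge N) ℂ :=
  fun e' e =>
    (((if e'.1.2 = e.1.1 then 1 else 0) : ℂ) - ((if e'.1 = (e.1.2, e.1.1) then 1 else 0) : ℂ)) *
      Complex.exp (Complex.I / 2 * ((φ e.1.1 e.1.2 : ℂ) + (φ e'.1.1 e'.1.2 : ℂ)))


/-- The scaled UME matrix `W = M / (2√(N−2))`. -/
def scaledUme (N : ℕ) (φ : Fin N → Fin N → ℝ) : Matrix (Fin N) (Fin N) ℂ :=
  ((1 / (2 * Real.sqrt ((N : ℝ) - 2)) : ℝ) : ℂ) • umeMatrix N φ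

/-- `Tr[T_n(W)]`, the trace of the `n`-th Chebyshev polynomial of the first kind evaluated
at the scaled UME matrix `W = M/(2√(N−2))`. -/
def chebTrace (N : ℕ) (φ : Fin N → Fin N → ℝ) (n : ℕ) : ℂ :=
  Matrix.trace (Polynomial.aeval (scaledUme N φ) (Polynomial.Chebyshev.T ℂ n))


/-!
Write `S` for the terminus incidence matrix of the complete graph twisted by the phases
(`S v e = e^{iφ_e}` if `v = τ(e)`), `T` for its origin incidence matrix and `Q` for the twisted
edge reversal (`Q ê e = e^{iφ_e}`). Then `M = S Tᵀ`, and conjugation by `diag(e^{iφ_e/2})` turns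
the Hashimoto matrix into `B = Tᵀ S - Q`. Antisymmetry of the phases gives `S Q = T`, `T Q = S`,
`Q² = 1`, and `T Tᵀ = (q + 1) I` with `q = N - 2`. These relations yield
`S B^(n+1) = A_(n+1) S - A_n T` for the sequence `A_0 = 1`, `A_1 = M`,
`A_(n+2) = M A_(n+1) - q A_n`, and cyclicity of the trace then gives
`Tr B^(n+2) = Tr A_(n+2) - q Tr A_n + [n even] (|E| - 2|V|) - [n odd] Tr Q`, where `Tr Q = 0`.
Finally `A_n = q^(n/2) U_n(W)` and `U_(n+2) - U_n = 2 T_(n+2)`.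
-/

open Polynomial

section ChebyshevU

variable {R A : Type*} [CommRing R] [Ring A] [Algebra R A]

def chebUSeq (x : A) (q : R) : ℕ → A
  | 0 => 1
  | 1 => x
  | n + 2 => x * chebUSeq x q (n + 1) - q • chebUSeq x q n

lemma chebUSeq_add_two (x : A) (q : R) (n : ℕ) :
    chebUSeq x q (n + 2) = x * chebUSeq x q (n + 1) - q • chebUSeq x q n := rfl

lemma commute_chebUSeq (x : A) (q : R) (n : ℕ) : Commute x (chebUSeq x q n) := by
  induction n using Nat.twoStepInduction with
  | zero => exact Commute.one_right x
  | one => exact Commute.refl x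
  | more n ih₀ ih₁ =>
    rw [chebUSeq_add_two]
    exact ((Commute.refl x).mul_right ih₁).sub_right (ih₀.smul_right q)

lemma chebUSeq_eq_smul_aeval_U (w : A) (s : R) (n : ℕ) :
    chebUSeq ((2 * s) • w) (s ^ 2) n = s ^ n • aeval w (Chebyshev.U R n) := by
  induction n using Nat.twoStepInduction with
  | zero => simp [chebUSeq]
  | one =>
    simp only [chebUSeq, Nat.cast_one, Chebyshev.U_one, pow_one, map_mul, aeval_X, map_ofNat]
    rw [two_mul w]
    module
  | more n ih₀ ih₁ =>
    rw [chebUSeq_add_two, ih₀, ih₁]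
    push_cast
    rw [Chebyshev.U_add_two]
    simp only [map_sub, map_mul, aeval_X, map_ofNat]
    rw [smul_mul_smul_comm, mul_assoc (2 : A), two_mul (w * _)]
    module

lemma chebUSeq_add_two_sub_smul (w : A) (s : R) (n : ℕ) :
    chebUSeq ((2 * s) • w) (s ^ 2) (n + 2) - s ^ 2 • chebUSeq ((2 * s) • w) (s ^ 2) n =
      (2 * s ^ (n + 2)) • aeval w (Chebyshev.T R (n + 2 : ℕ)) := by
  rw [chebUSeq_eq_smul_aeval_U, chebUSeq_eq_smul_aeval_U, Nat.cast_add, Nat.cast_ofNat,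
    Chebyshev.U_eq_two_mul_T_add_U, smul_smul, ← pow_add, add_comm 2 n, map_add, smul_add,
    add_sub_cancel_right, map_mul, map_ofNat, mul_smul, two_mul (aeval w _)]
  module

end ChebyshevU

namespace Matrix

lemma trace_conj_pow {n R : Type*} [Fintype n] [DecidableEq n] [CommRing R]
    {P P' : Matrix n n R} (h : P' * P = 1) (X : Matrix n n R) (k : ℕ) :
    trace ((P * X * P') ^ k) = trace (X ^ k) := by
  let u : (Matrix n n R)ˣ := ⟨P, P', mul_eq_one_comm.mp h, h⟩
  exact (congrArg trace (Units.conj_pow u X k)).trans (trace_units_conj u (X ^ k))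

section Nonbacktracking

-- `S` and `T` stand for the terminus and origin incidence matrices of a `(q + 1)`-regular graph
-- and `Q` for its edge reversal, so that `S * Tᵀ` is the adjacency matrix.
variable {R V E : Type*} [CommRing R] [Fintype V] [Fintype E] {S T : Matrix V E R}
  {Q : Matrix E E R} {q : R}

def nonbacktracking (S T : Matrix V E R) (Q : Matrix E E R) : Matrix E E R := Tᵀ * S - Q

lemma terminus_mul_nonbacktracking (hSQ : S * Q = T) :
    S * nonbacktracking S T Q = S * Tᵀ * S - T := by
  rw [nonbacktracking, Matrix.mul_sub, ← Matrix.mul_assoc, hSQ]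

lemma origin_mul_nonbacktracking [DecidableEq V] (hTT : T * Tᵀ = (q + 1) • 1)
    (hTQ : T * Q = S) : T * nonbacktracking S T Q = q • S := by
  rw [nonbacktracking, Matrix.mul_sub, ← Matrix.mul_assoc, hTT, hTQ, smul_mul, Matrix.one_mul,
    add_smul, one_smul, add_sub_cancel_right]

lemma nonbacktracking_mul_reversal [DecidableEq E] (hSQ : S * Q = T) (hQQ : Q * Q = 1) :
    nonbacktracking S T Q * Q = Tᵀ * T - 1 := by
  rw [nonbacktracking, Matrix.sub_mul, Matrix.mul_assoc, hSQ, hQQ]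

variable [DecidableEq E]

lemma terminus_mul_nonbacktracking_pow_succ [DecidableEq V] (hTT : T * Tᵀ = (q + 1) • 1)
    (hSQ : S * Q = T) (hTQ : T * Q = S) (n : ℕ) :
    S * nonbacktracking S T Q ^ (n + 1) =
      chebUSeq (S * Tᵀ) q (n + 1) * S - chebUSeq (S * Tᵀ) q n * T := by
  induction n with
  | zero => simp [chebUSeq, terminus_mul_nonbacktracking hSQ]
  | succ n ih =>
    rw [pow_succ, ← Matrix.mul_assoc, ih, Matrix.sub_mul, Matrix.mul_assoc, Matrix.mul_assoc,
      terminus_mul_nonbacktracking hSQ, origin_mul_nonbacktracking hTT hTQ, chebUSeq_add_two,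
      Matrix.sub_mul, Matrix.smul_mul, Matrix.mul_sub, ← Matrix.mul_assoc,
      (commute_chebUSeq (S * Tᵀ) q (n + 1)).eq, ← Matrix.mul_assoc, Matrix.mul_smul]
    abel

lemma origin_mul_nonbacktracking_pow_succ [DecidableEq V] (hTT : T * Tᵀ = (q + 1) • 1)
    (hTQ : T * Q = S) (n : ℕ) :
    T * nonbacktracking S T Q ^ (n + 1) = q • (S * nonbacktracking S T Q ^ n) := by
  rw [pow_succ', ← Matrix.mul_assoc, origin_mul_nonbacktracking hTT hTQ, smul_mul]

lemma trace_nonbacktracking_pow_succ (n : ℕ) :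
    trace (nonbacktracking S T Q ^ (n + 1)) =
      trace (S * nonbacktracking S T Q ^ n * Tᵀ) - trace (nonbacktracking S T Q ^ n * Q) := by
  rw [pow_succ, nonbacktracking, Matrix.mul_sub, trace_sub, ← Matrix.mul_assoc, trace_mul_comm,
    ← Matrix.mul_assoc]

lemma trace_nonbacktracking_pow_succ_mul_reversal (hSQ : S * Q = T) (hQQ : Q * Q = 1) (n : ℕ) :
    trace (nonbacktracking S T Q ^ (n + 1) * Q) =
      trace (T * nonbacktracking S T Q ^ n * Tᵀ) - trace (nonbacktracking S T Q ^ n) := by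
  rw [pow_succ, Matrix.mul_assoc, nonbacktracking_mul_reversal hSQ hQQ, Matrix.mul_sub,
    Matrix.mul_one, trace_sub, ← Matrix.mul_assoc, trace_mul_comm, ← Matrix.mul_assoc]

lemma trace_nonbacktracking_pow_add_two (hSQ : S * Q = T) (hQQ : Q * Q = 1) (n : ℕ) :
    trace (nonbacktracking S T Q ^ (n + 2)) = trace (nonbacktracking S T Q ^ n) +
      trace (S * nonbacktracking S T Q ^ (n + 1) * Tᵀ) -
      trace (T * nonbacktracking S T Q ^ n * Tᵀ) := by
  rw [trace_nonbacktracking_pow_succ, trace_nonbacktracking_pow_succ_mul_reversal hSQ hQQ]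
  abel

lemma trace_terminus_mul_nonbacktracking_pow_succ_mul_transpose [DecidableEq V]
    (hTT : T * Tᵀ = (q + 1) • 1) (hSQ : S * Q = T) (hTQ : T * Q = S) (n : ℕ) :
    trace (S * nonbacktracking S T Q ^ (n + 1) * Tᵀ) =
      trace (chebUSeq (S * Tᵀ) q (n + 2)) - trace (chebUSeq (S * Tᵀ) q n) := by
  rw [terminus_mul_nonbacktracking_pow_succ hTT hSQ hTQ, Matrix.sub_mul, Matrix.mul_assoc,
    Matrix.mul_assoc, hTT, trace_sub, trace_mul_comm, chebUSeq_add_two, trace_sub, mul_smul_comm,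
    Matrix.mul_one, trace_smul, trace_smul, add_smul, one_smul]
  abel

theorem trace_nonbacktracking_pow_add_two_eq_chebUSeq [DecidableEq V]
    (hTT : T * Tᵀ = (q + 1) • 1) (hSQ : S * Q = T) (hTQ : T * Q = S) (hQQ : Q * Q = 1) (n : ℕ) :
    trace (nonbacktracking S T Q ^ (n + 2)) =
      trace (chebUSeq (S * Tᵀ) q (n + 2)) - q * trace (chebUSeq (S * Tᵀ) q n) +
        if Even n then (Fintype.card E : R) - 2 * Fintype.card V else - trace Q := by
  have hS := trace_terminus_mul_nonbacktracking_pow_succ_mul_transpose hTT hSQ hTQ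
  induction n using Nat.twoStepInduction with
  | zero =>
    rw [trace_nonbacktracking_pow_add_two hSQ hQQ, hS]
    simp only [pow_zero, trace_one, chebUSeq, trace_sub, trace_smul, smul_eq_mul, Matrix.mul_one,
      hTT, Even.zero, if_true]
    ring
  | one =>
    rw [trace_nonbacktracking_pow_add_two hSQ hQQ, hS, origin_mul_nonbacktracking_pow_succ hTT hTQ,
      trace_nonbacktracking_pow_succ]
    simp only [pow_zero, Matrix.mul_one, Matrix.one_mul, chebUSeq, trace_sub, trace_smul,
      smul_eq_mul, smul_mul, Nat.not_even_one, if_false]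
    ring
  | more n ih _ =>
    rw [trace_nonbacktracking_pow_add_two hSQ hQQ, ih, hS,
      origin_mul_nonbacktracking_pow_succ hTT hTQ, smul_mul, trace_smul, hS]
    simp only [smul_eq_mul, Nat.even_add, even_two, iff_true]
    ring

end Nonbacktracking

end Matrix

namespace DirEdge

variable {N : ℕ}

def reverse (e : DirEdge N) : DirEdge N := ⟨(e.1.2, e.1.1), e.2.symm⟩

@[simp]
lemma reverse_val (e : DirEdge N) : e.reverse.1 = (e.1.2, e.1.1) := rfl

@[simp]
lemma reverse_reverse (e : DirEdge N) : e.reverse.reverse = e := rfl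

lemma sum_eq_sum_sum {M : Type*} [AddCommMonoid M] (f : Fin N × Fin N → M) :
    ∑ e : DirEdge N, f e.1 = ∑ i, ∑ j, if i = j then 0 else f (i, j) := by
  rw [← Finset.sum_subtype (Finset.univ.filter fun p : Fin N × Fin N => p.1 ≠ p.2) (by simp) f,
    Finset.sum_filter, Fintype.sum_prod_type]
  simp only [ite_not]

lemma card_add (N : ℕ) : Fintype.card (DirEdge N) + N = N * N := by
  have h : (Finset.univ.filter fun e : Fin N × Fin N => e.1 ≠ e.2) = Finset.univ.offDiag := by
    ext; simp
  rw [Fintype.card_subtype, h, Finset.offDiag_card, Finset.card_univ, Fintype.card_fin,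
    Nat.sub_add_cancel (Nat.le_mul_self N)]

end DirEdge

section CompleteGraph

variable {N : ℕ} (φ : Fin N → Fin N → ℝ)

def terminusInc : Matrix (Fin N) (DirEdge N) ℂ :=
  fun v e => if v = e.1.1 then Complex.exp (Complex.I * φ e.1.1 e.1.2) else 0

def originInc (N : ℕ) : Matrix (Fin N) (DirEdge N) ℂ :=
  fun v e => if v = e.1.2 then 1 else 0

def reversal : Matrix (DirEdge N) (DirEdge N) ℂ :=
  fun e' e => if e' = e.reverse then Complex.exp (Complex.I * φ e.1.1 e.1.2) else 0

lemma exp_mul_exp_of_antisymm (hφ : ∀ μ ν, φ ν μ = - φ μ ν) (μ ν : Fin N) :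
    Complex.exp (Complex.I * φ ν μ) * Complex.exp (Complex.I * φ μ ν) = 1 := by
  rw [← Complex.exp_add, hφ, Complex.ofReal_neg, mul_neg, neg_add_cancel, Complex.exp_zero]

lemma terminusInc_mul_originInc_transpose : terminusInc φ * (originInc N)ᵀ = umeMatrix N φ := by
  ext v w
  simp only [mul_apply, transpose_apply, terminusInc, originInc, mul_ite, mul_one, mul_zero]
  by_cases hvw : v = w
  · subst hvw
    refine (Finset.sum_eq_zero fun e _ => ?_).trans (if_pos rfl).symm
    have := e.2
    grind
  · rw [Fintype.sum_eq_single ⟨(v, w), hvw⟩]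
    · simp [umeMatrix, hvw]
    · grind

lemma originInc_mul_transpose :
    originInc N * (originInc N)ᵀ = ((N : ℂ) - 1) • (1 : Matrix (Fin N) (Fin N) ℂ) := by
  ext v w
  simp only [mul_apply, transpose_apply, originInc, Matrix.smul_apply, one_apply, smul_eq_mul]
  by_cases hvw : v = w
  · subst hvw
    simp only [mul_boole, ← ite_and, and_self]
    rw [DirEdge.sum_eq_sum_sum (fun p => if v = p.2 then (1 : ℂ) else 0)]
    simp [Finset.sum_ite, Finset.filter_eq', Finset.filter_ne', Nat.cast_pred v.pos]
  · refine (Finset.sum_eq_zero fun e _ => ?_).trans (by simp [hvw])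
    grind

lemma terminusInc_mul_reversal (hφ : ∀ μ ν, φ ν μ = - φ μ ν) :
    terminusInc φ * reversal φ = originInc N := by
  ext v e
  rw [mul_apply, Fintype.sum_eq_single e.reverse]
  · by_cases h : v = e.1.2 <;> simp [terminusInc, reversal, originInc, h,
      exp_mul_exp_of_antisymm φ hφ]
  · intro e' he'
    simp [reversal, he']

lemma originInc_mul_reversal : originInc N * reversal φ = terminusInc φ := by
  ext v e
  rw [mul_apply, Fintype.sum_eq_single e.reverse]
  · by_cases h : v = e.1.1 <;> simp [terminusInc, reversal, originInc, h]
  · intro e' he'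
    simp [reversal, he']

lemma reversal_mul_self (hφ : ∀ μ ν, φ ν μ = - φ μ ν) : reversal φ * reversal φ = 1 := by
  ext e'' e
  rw [mul_apply, Fintype.sum_eq_single e.reverse]
  · by_cases h : e'' = e <;> simp [reversal, one_apply, h, exp_mul_exp_of_antisymm φ hφ]
  · intro e' he'
    simp [reversal, he']

lemma trace_reversal : trace (reversal φ) = 0 :=
  Finset.sum_eq_zero fun e _ => if_neg fun h => e.2 (congrArg (fun x => x.1.1) h)

lemma nonbacktracking_apply (e' e : DirEdge N) :
    nonbacktracking (terminusInc φ) (originInc N) (reversal φ) e' e =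
      ((if e'.1.2 = e.1.1 then 1 else 0) - if e'.1 = (e.1.2, e.1.1) then 1 else 0) *
        Complex.exp (Complex.I * φ e.1.1 e.1.2) := by
  rw [nonbacktracking, Matrix.sub_apply, mul_apply, Fintype.sum_eq_single e'.1.2]
  · simp only [transpose_apply, originInc, terminusInc, reversal, Subtype.ext_iff,
      DirEdge.reverse_val, if_true, one_mul, sub_mul, ite_mul, zero_mul]
  · intro v hv
    simp [originInc, hv]

lemma hashimoto_eq_conj :
    hashimoto N φ = diagonal (fun e : DirEdge N => Complex.exp (Complex.I / 2 * φ e.1.1 e.1.2)) *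
      nonbacktracking (terminusInc φ) (originInc N) (reversal φ) *
      diagonal (fun e : DirEdge N => Complex.exp (-(Complex.I / 2) * φ e.1.1 e.1.2)) := by
  ext e' e
  have hexp : Complex.exp (Complex.I / 2 * (φ e.1.1 e.1.2 + φ e'.1.1 e'.1.2)) =
      Complex.exp (Complex.I / 2 * φ e'.1.1 e'.1.2) * Complex.exp (Complex.I * φ e.1.1 e.1.2) *
        Complex.exp (-(Complex.I / 2) * φ e.1.1 e.1.2) := by
    rw [← Complex.exp_add, ← Complex.exp_add]
    ring_nf
  rw [mul_diagonal, diagonal_mul, hashimoto, nonbacktracking_apply, hexp]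
  ring

lemma trace_hashimoto_pow (n : ℕ) :
    trace (hashimoto N φ ^ n) =
      trace (nonbacktracking (terminusInc φ) (originInc N) (reversal φ) ^ n) := by
  refine (congrArg (fun Y => trace (Y ^ n)) (hashimoto_eq_conj φ)).trans (trace_conj_pow ?_ _ n)
  rw [diagonal_mul_diagonal, ← diagonal_one]
  congr 1
  ext e
  rw [← Complex.exp_add, neg_mul, neg_add_cancel, Complex.exp_zero]

lemma trace_hashimoto : trace (hashimoto N φ) = 0 :=
  Finset.sum_eq_zero fun e _ => by
    have h := e.2
    simp [hashimoto, Ne.symm h, Prod.ext_iff, h]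

lemma trace_hashimoto_pow_add_two (hφ : ∀ μ ν, φ ν μ = - φ μ ν) (n : ℕ) :
    trace (hashimoto N φ ^ (n + 2)) =
      trace (chebUSeq (umeMatrix N φ) ((N : ℂ) - 2) (n + 2)) -
        ((N : ℂ) - 2) * trace (chebUSeq (umeMatrix N φ) ((N : ℂ) - 2) n) +
        if Even n then (N : ℂ) * (N - 3) else 0 := by
  have hTT : originInc N * (originInc N)ᵀ = ((N : ℂ) - 2 + 1) • 1 := by
    rw [originInc_mul_transpose, show (N : ℂ) - 2 + 1 = N - 1 by ring]
  have hcard : (Fintype.card (DirEdge N) : ℂ) = N * N - N :=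
    eq_sub_of_add_eq (by exact_mod_cast DirEdge.card_add N)
  rw [trace_hashimoto_pow, trace_nonbacktracking_pow_add_two_eq_chebUSeq hTT
    (terminusInc_mul_reversal φ hφ) (originInc_mul_reversal φ) (reversal_mul_self φ hφ),
    terminusInc_mul_originInc_transpose, trace_reversal, hcard, Fintype.card_fin, neg_zero]
  congr 2
  ring

lemma trace_umeMatrix : trace (umeMatrix N φ) = 0 :=
  Finset.sum_eq_zero fun _ _ => if_pos rfl

lemma sqrt_sub_two_ne_zero (hN : 2 < N) : (Real.sqrt ((N : ℝ) - 2) : ℂ) ≠ 0 := by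
  rw [Complex.ofReal_ne_zero, Real.sqrt_ne_zero', sub_pos]
  exact_mod_cast hN

lemma sqrt_sub_two_sq (hN : 2 ≤ N) : (Real.sqrt ((N : ℝ) - 2) : ℂ) ^ 2 = (N : ℂ) - 2 := by
  rw [← Complex.ofReal_pow, Real.sq_sqrt (sub_nonneg.mpr (by exact_mod_cast hN)),
    Complex.ofReal_sub, Complex.ofReal_natCast, Complex.ofReal_ofNat]

lemma umeMatrix_eq_smul_scaledUme (hN : 2 < N) :
    umeMatrix N φ = (2 * (Real.sqrt ((N : ℝ) - 2) : ℂ)) • scaledUme N φ := by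
  rw [scaledUme, smul_smul, Complex.ofReal_div, Complex.ofReal_one, Complex.ofReal_mul,
    Complex.ofReal_ofNat, mul_one_div_cancel (mul_ne_zero two_ne_zero (sqrt_sub_two_ne_zero hN)),
    one_smul]

lemma chebTrace_one : chebTrace N φ 1 = 0 := by
  rw [chebTrace, Nat.cast_one, Chebyshev.T_one, aeval_X, scaledUme, trace_smul, trace_umeMatrix,
    smul_zero]

lemma trace_chebUSeq_umeMatrix_add_two_sub (hN : 2 < N) (n : ℕ) :
    trace (chebUSeq (umeMatrix N φ) ((N : ℂ) - 2) (n + 2)) -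
        ((N : ℂ) - 2) * trace (chebUSeq (umeMatrix N φ) ((N : ℂ) - 2) n) =
      2 * (Real.sqrt ((N : ℝ) - 2) : ℂ) ^ (n + 2) * chebTrace N φ (n + 2) := by
  have h := congrArg trace
    (chebUSeq_add_two_sub_smul (scaledUme N φ) (Real.sqrt ((N : ℝ) - 2) : ℂ) n)
  rw [trace_sub, trace_smul, trace_smul, smul_eq_mul, smul_eq_mul] at h
  rw [umeMatrix_eq_smul_scaledUme φ hN, ← sqrt_sub_two_sq hN.le, h, chebTrace]

end CompleteGraph

/-- for `N ≥ 3`, any antisymmetric phases and every `n ≥ 1`,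
`y_n(Φ) = (2/N)·Tr[T_n(W)] + ((N−3)/2)·(1+(−1)^n)/(N−2)^{n/2}`, where
`y_n(Φ) = Tr[Y(Φ)^n]/(N(N−2)^{n/2})` and `W = M/(2√(N−2))`. -/
theorem hashimoto_chebyshev_trace (N : ℕ) (hN : 3 ≤ N) (φ : Fin N → Fin N → ℝ)
    (hφ : ∀ μ ν, φ ν μ = - φ μ ν) (n : ℕ) (hn : 1 ≤ n) :
    Matrix.trace ((hashimoto N φ) ^ n) / ((N : ℂ) * ((Real.sqrt ((N : ℝ) - 2) : ℂ)) ^ n)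
      = 2 / (N : ℂ) * chebTrace N φ n
        + ((N : ℂ) - 3) / 2 * (1 + (-1 : ℂ) ^ n) / ((Real.sqrt ((N : ℝ) - 2) : ℂ)) ^ n := by
  have hs := sqrt_sub_two_ne_zero hN
  have hN₀ : (N : ℂ) ≠ 0 := Nat.cast_ne_zero.mpr (by omega)
  obtain rfl | ⟨m, rfl⟩ : n = 1 ∨ ∃ m, n = m + 2 :=
    (Nat.lt_or_ge n 2).imp (by omega) fun h => ⟨n - 2, by omega⟩
  · simp [trace_hashimoto, chebTrace_one]
  · rw [trace_hashimoto_pow_add_two φ hφ, trace_chebUSeq_umeMatrix_add_two_sub φ hN,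
      pow_add (-1 : ℂ), neg_one_sq, mul_one]
    rcases Nat.even_or_odd m with hm | hm
    · rw [if_pos hm, hm.neg_one_pow]
      field_simp
      ring
    · rw [if_neg (Nat.not_even_iff_odd.mpr hm), hm.neg_one_pow]
      field_simp
      ring
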